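/- arXiv:2210.16824 — 6 statements merged into one kernel-verified Lean document; each statement's English description precedes it below -/
import Mathlib

section
/- The ideal I = ⟨x³, y³, x²y, x²z - xy²⟩ in k[x,y,z] over a field k is a primary ideal. -/
open MvPolynomial

namespace Stmt0Aux

variable {k : Type*} [Field k]

/-- exponent vector x^a y^b z^c -/
noncomputable def μ (a b c : ℕ) : Fin 3 →₀ ℕ :=
  Finsupp.single 0 a + Finsupp.single 1 b + Finsupp.single 2 c

lemma μ_apply (a b c : ℕ) (i : Fin 3) :
    μ a b c i = if i = 0 then a else if i = 1 then b else c := by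
  fin_cases i <;> simp [μ, Finsupp.single_apply]

lemma μ_le {a b c a' b' c' : ℕ} :
    μ a' b' c' ≤ μ a b c ↔ a' ≤ a ∧ b' ≤ b ∧ c' ≤ c := by
  constructor
  · intro h
    exact ⟨by simpa [μ_apply] using h 0, by simpa [μ_apply] using h 1,
      by simpa [μ_apply] using h 2⟩
  · rintro ⟨h1, h2, h3⟩ i
    fin_cases i <;> simpa [μ_apply]

lemma μ_sub (a b c a' b' c' : ℕ) :
    μ a b c - μ a' b' c' = μ (a - a') (b - b') (c - c') := by
  ext i
  fin_cases i <;> simp [μ_apply, Finsupp.tsub_apply]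

lemma μ_eq_iff {a b c a' b' c' : ℕ} :
    μ a b c = μ a' b' c' ↔ a = a' ∧ b = b' ∧ c = c' := by
  constructor
  · intro h
    refine ⟨?_, ?_, ?_⟩
    · simpa [μ_apply] using Finsupp.ext_iff.mp h 0
    · simpa [μ_apply] using Finsupp.ext_iff.mp h 1
    · simpa [μ_apply] using Finsupp.ext_iff.mp h 2
  · rintro ⟨rfl, rfl, rfl⟩; rfl

lemma single2_eq_μ (n : ℕ) : Finsupp.single (2 : Fin 3) n = μ 0 0 n := by
  simp [μ]

lemma X_prod (a b c : ℕ) :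
    (X 0 : MvPolynomial (Fin 3) k) ^ a * X 1 ^ b * X 2 ^ c = monomial (μ a b c) 1 := by
  simp [X_pow_eq_monomial, monomial_mul, μ]

noncomputable def emb : Polynomial k →ₐ[k] MvPolynomial (Fin 3) k := Polynomial.aeval (X 2)

lemma coeff_emb (q : Polynomial k) (a b c : ℕ) :
    coeff (μ a b c) (emb q) = if a = 0 ∧ b = 0 then q.coeff c else 0 := by
  classical
  induction q using Polynomial.induction_on' with
  | add p r hp hr =>
    simp only [map_add, coeff_add, hp, hr, Polynomial.coeff_add]
    split_ifs <;> simp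
  | monomial n r =>
    simp only [emb, Polynomial.aeval_monomial]
    rw [algebraMap_eq, coeff_C_mul, coeff_X_pow, single2_eq_μ]
    rw [Polynomial.coeff_monomial]
    by_cases ha : a = 0 ∧ b = 0
    · obtain ⟨rfl, rfl⟩ := ha
      by_cases hn : n = c
      · subst hn; simp [μ_eq_iff]
      · simp [μ_eq_iff, hn, Ne.symm hn]
    · have : ¬ (μ 0 0 n = μ a b c) := by
        rw [μ_eq_iff]; tauto
      simp [this, ha]



noncomputable def Ide : Ideal (MvPolynomial (Fin 3) k) :=
  Ideal.span {(X 0 : MvPolynomial (Fin 3) k) ^ 3, X 1 ^ 3, X 0 ^ 2 * X 1,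
    X 0 ^ 2 * X 2 - X 0 * X 1 ^ 2}

lemma g1_mem : ((X 0 : MvPolynomial (Fin 3) k) ^ 3) ∈ (Ide : Ideal (MvPolynomial (Fin 3) k)) :=
  Ideal.subset_span (by simp)
lemma g2_mem : ((X 1 : MvPolynomial (Fin 3) k) ^ 3) ∈ (Ide : Ideal (MvPolynomial (Fin 3) k)) :=
  Ideal.subset_span (by simp)
lemma g3_mem : ((X 0 : MvPolynomial (Fin 3) k) ^ 2 * X 1) ∈ (Ide : Ideal (MvPolynomial (Fin 3) k)) :=
  Ideal.subset_span (by simp)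
lemma g4_mem : ((X 0 : MvPolynomial (Fin 3) k) ^ 2 * X 2 - X 0 * X 1 ^ 2) ∈ (Ide : Ideal (MvPolynomial (Fin 3) k)) :=
  Ideal.subset_span (by simp)

noncomputable def T (c : Fin 6 → Polynomial k) : MvPolynomial (Fin 3) k :=
  emb (c 0) + emb (c 1) * X 1 + emb (c 2) * X 1 ^ 2 + emb (c 3) * X 0 +
    emb (c 4) * (X 0 * X 1) + emb (c 5) * X 0 ^ 2

lemma normal_form (f : MvPolynomial (Fin 3) k) : ∃ c : Fin 6 → Polynomial k, f - T c ∈ Ide := by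
  induction f using MvPolynomial.induction_on with
  | C a =>
    refine ⟨![Polynomial.C a, 0, 0, 0, 0, 0], ?_⟩
    have h : T ![Polynomial.C a, 0, 0, 0, 0, 0] = C a := by
      have e5 : (![Polynomial.C a, 0, 0, 0, 0, 0] : Fin 6 → Polynomial k) 5 = 0 := rfl
      simp [T, emb, e5]
    rw [h, sub_self]
    exact Ideal.zero_mem _
  | add p q hp hq =>
    obtain ⟨c, hc⟩ := hp; obtain ⟨d, hd⟩ := hq
    refine ⟨c + d, ?_⟩
    have h : T (c + d) = T c + T d := by
      simp only [T, Pi.add_apply, map_add]; ring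
    rw [h]
    have h2 : p + q - (T c + T d) = (p - T c) + (q - T d) := by ring
    rw [h2]; exact Ideal.add_mem _ hc hd
  | mul_X p i hp =>
    obtain ⟨c, hc⟩ := hp
    fin_cases i
    · refine ⟨![0, 0, 0, c 0, c 1, c 2 * Polynomial.X + c 3], ?_⟩
      have e5 : (![0, 0, 0, c 0, c 1, c 2 * Polynomial.X + c 3] : Fin 6 → Polynomial k) 5 =
          c 2 * Polynomial.X + c 3 := rfl
      have key : T c * X 0 - T ![0, 0, 0, c 0, c 1, c 2 * Polynomial.X + c 3] =
          emb (c 2) * (-((X 0:MvPolynomial (Fin 3) k) ^ 2 * X 2 - X 0 * X 1 ^ 2)) +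
          emb (c 4) * (X 0 ^ 2 * X 1) + emb (c 5) * (X 0 ^ 3) := by
        simp only [T, e5, Matrix.cons_val_zero, Matrix.cons_val_one, Matrix.head_cons,
          Matrix.cons_val_two, Matrix.tail_cons, Matrix.cons_val_three, Matrix.cons_val_four,
          map_add, map_mul, map_zero, Polynomial.aeval_X, emb]
        ring
      have mem : T c * X 0 - T ![0, 0, 0, c 0, c 1, c 2 * Polynomial.X + c 3] ∈
          (Ide : Ideal (MvPolynomial (Fin 3) k)) := by
        rw [key]
        exact Ideal.add_mem _ (Ideal.add_mem _
          (Ideal.mul_mem_left _ _ (neg_mem g4_mem))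
          (Ideal.mul_mem_left _ _ g3_mem)) (Ideal.mul_mem_left _ _ g1_mem)
      have h2 : p * X 0 - T ![0, 0, 0, c 0, c 1, c 2 * Polynomial.X + c 3] =
          (p - T c) * X 0 + (T c * X 0 - T ![0, 0, 0, c 0, c 1, c 2 * Polynomial.X + c 3]) := by
        ring
      show p * X 0 - T ![0, 0, 0, c 0, c 1, c 2 * Polynomial.X + c 3] ∈ Ide
      rw [h2]
      exact Ideal.add_mem _ (Ideal.mul_mem_right _ _ hc) mem
    · refine ⟨![0, c 0, c 1, 0, c 3, c 4 * Polynomial.X], ?_⟩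
      have e5 : (![0, c 0, c 1, 0, c 3, c 4 * Polynomial.X] : Fin 6 → Polynomial k) 5 =
          c 4 * Polynomial.X := rfl
      have key : T c * X 1 - T ![0, c 0, c 1, 0, c 3, c 4 * Polynomial.X] =
          emb (c 2) * ((X 1:MvPolynomial (Fin 3) k) ^ 3) +
          emb (c 4) * (-((X 0:MvPolynomial (Fin 3) k) ^ 2 * X 2 - X 0 * X 1 ^ 2)) +
          emb (c 5) * (X 0 ^ 2 * X 1) := by
        simp only [T, e5, Matrix.cons_val_zero, Matrix.cons_val_one, Matrix.head_cons,
          Matrix.cons_val_two, Matrix.tail_cons, Matrix.cons_val_three, Matrix.cons_val_four,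
          map_add, map_mul, map_zero, Polynomial.aeval_X, emb]
        ring
      have mem : T c * X 1 - T ![0, c 0, c 1, 0, c 3, c 4 * Polynomial.X] ∈
          (Ide : Ideal (MvPolynomial (Fin 3) k)) := by
        rw [key]
        exact Ideal.add_mem _ (Ideal.add_mem _
          (Ideal.mul_mem_left _ _ g2_mem)
          (Ideal.mul_mem_left _ _ (neg_mem g4_mem)))
          (Ideal.mul_mem_left _ _ g3_mem)
      have h2 : p * X 1 - T ![0, c 0, c 1, 0, c 3, c 4 * Polynomial.X] =
          (p - T c) * X 1 + (T c * X 1 - T ![0, c 0, c 1, 0, c 3, c 4 * Polynomial.X]) := by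
        ring
      show p * X 1 - T ![0, c 0, c 1, 0, c 3, c 4 * Polynomial.X] ∈ Ide
      rw [h2]
      exact Ideal.add_mem _ (Ideal.mul_mem_right _ _ hc) mem
    · refine ⟨fun i => c i * Polynomial.X, ?_⟩
      have key : T (fun i => c i * Polynomial.X) = T c * X 2 := by
        simp only [T, map_mul, Polynomial.aeval_X, emb]
        ring
      have h2 : p * X 2 - T c * X 2 = (p - T c) * X 2 := by ring
      show p * X 2 - T (fun i => c i * Polynomial.X) ∈ Ide
      rw [key, h2]
      exact Ideal.mul_mem_right _ _ hc

lemma coeff_emb_mul (q : Polynomial k) (a' b' a b j : ℕ) :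
    coeff (μ a b j) (emb q * monomial (μ a' b' 0) 1) =
      if a' = a ∧ b' = b then q.coeff j else 0 := by
  rw [coeff_mul_monomial']
  by_cases hle : μ a' b' 0 ≤ μ a b j
  · rw [if_pos hle, μ_sub, coeff_emb, mul_one, Nat.sub_zero]
    obtain ⟨h1, h2, -⟩ := μ_le.mp hle
    by_cases he : a' = a ∧ b' = b
    · obtain ⟨rfl, rfl⟩ := he
      simp
    · have hne : ¬(a - a' = 0 ∧ b - b' = 0) := by omega
      rw [if_neg hne, if_neg he]
  · rw [if_neg hle]
    rw [μ_le] at hle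
    have : ¬(a' = a ∧ b' = b) := by omega
    rw [if_neg this]

lemma coeff_mul_g (h : MvPolynomial (Fin 3) k) (a' b' c' a b j : ℕ) :
    coeff (μ a b j) (h * monomial (μ a' b' c') 1) =
      if a' ≤ a ∧ b' ≤ b ∧ c' ≤ j then coeff (μ (a - a') (b - b') (j - c')) h else 0 := by
  rw [coeff_mul_monomial', μ_sub]
  simp only [μ_le, mul_one]

lemma hX1m : (X 1 : MvPolynomial (Fin 3) k) = monomial (μ 0 1 0) 1 := by
  simpa using X_prod (k := k) 0 1 0
lemma hX1sq : (X 1 : MvPolynomial (Fin 3) k) ^ 2 = monomial (μ 0 2 0) 1 := by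
  simpa using X_prod (k := k) 0 2 0
lemma hX0m : (X 0 : MvPolynomial (Fin 3) k) = monomial (μ 1 0 0) 1 := by
  simpa using X_prod (k := k) 1 0 0
lemma hX0X1 : (X 0 : MvPolynomial (Fin 3) k) * X 1 = monomial (μ 1 1 0) 1 := by
  simpa using X_prod (k := k) 1 1 0
lemma hX0sq : (X 0 : MvPolynomial (Fin 3) k) ^ 2 = monomial (μ 2 0 0) 1 := by
  simpa using X_prod (k := k) 2 0 0
lemma hG1 : (X 0 : MvPolynomial (Fin 3) k) ^ 3 = monomial (μ 3 0 0) 1 := by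
  simpa using X_prod (k := k) 3 0 0
lemma hG2 : (X 1 : MvPolynomial (Fin 3) k) ^ 3 = monomial (μ 0 3 0) 1 := by
  simpa using X_prod (k := k) 0 3 0
lemma hG3 : (X 0 : MvPolynomial (Fin 3) k) ^ 2 * X 1 = monomial (μ 2 1 0) 1 := by
  simpa using X_prod (k := k) 2 1 0
lemma hG4a : (X 0 : MvPolynomial (Fin 3) k) ^ 2 * X 2 = monomial (μ 2 0 1) 1 := by
  simpa using X_prod (k := k) 2 0 1
lemma hG4b : (X 0 : MvPolynomial (Fin 3) k) * X 1 ^ 2 = monomial (μ 1 2 0) 1 := by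
  simpa using X_prod (k := k) 1 2 0

lemma coeff_T (c : Fin 6 → Polynomial k) (a b j : ℕ) :
    coeff (μ a b j) (T c) =
      (if a = 0 ∧ b = 0 then (c 0).coeff j else 0) +
      (if 0 = a ∧ 1 = b then (c 1).coeff j else 0) +
      (if 0 = a ∧ 2 = b then (c 2).coeff j else 0) +
      (if 1 = a ∧ 0 = b then (c 3).coeff j else 0) +
      (if 1 = a ∧ 1 = b then (c 4).coeff j else 0) +
      (if 2 = a ∧ 0 = b then (c 5).coeff j else 0) := by
  rw [T, hX1sq, hX0sq, hX0X1, hX1m, hX0m]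
  simp only [coeff_add, coeff_emb_mul, coeff_emb]

lemma indep (c : Fin 6 → Polynomial k) (h : T c ∈ (Ide : Ideal (MvPolynomial (Fin 3) k))) :
    ∀ i, c i = 0 := by
  rw [Ide, Ideal.span] at h
  rw [show ({(X 0 : MvPolynomial (Fin 3) k) ^ 3, X 1 ^ 3, X 0 ^ 2 * X 1,
      X 0 ^ 2 * X 2 - X 0 * X 1 ^ 2} : Set (MvPolynomial (Fin 3) k)) =
      insert ((X 0 : MvPolynomial (Fin 3) k) ^ 3) (insert ((X 1:MvPolynomial (Fin 3) k) ^ 3)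
        (insert ((X 0:MvPolynomial (Fin 3) k) ^ 2 * X 1)
          {(X 0:MvPolynomial (Fin 3) k) ^ 2 * X 2 - X 0 * X 1 ^ 2})) from rfl] at h
  obtain ⟨h1, w1, hw1, e1⟩ := Ideal.mem_span_insert.mp h
  obtain ⟨h2, w2, hw2, e2⟩ := Ideal.mem_span_insert.mp hw1
  obtain ⟨h3, w3, hw3, e3⟩ := Ideal.mem_span_insert.mp hw2
  obtain ⟨h4, e4⟩ := Ideal.mem_span_singleton'.mp hw3
  subst e3 e2
  have E : T c = h1 * ((X 0:MvPolynomial (Fin 3) k) ^ 3) + h2 * (X 1 ^ 3) +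
      h3 * (X 0 ^ 2 * X 1) + (h4 * (X 0 ^ 2 * X 2) - h4 * (X 0 * X 1 ^ 2)) := by
    rw [e1, ← e4]; ring
  rw [hG1, hG2, hG3, hG4a, hG4b] at E
  have key : ∀ a b j : ℕ, coeff (μ a b j) (T c) =
      (if 3 ≤ a ∧ 0 ≤ b ∧ 0 ≤ j then coeff (μ (a-3) (b-0) (j-0)) h1 else 0) +
      (if 0 ≤ a ∧ 3 ≤ b ∧ 0 ≤ j then coeff (μ (a-0) (b-3) (j-0)) h2 else 0) +
      (if 2 ≤ a ∧ 1 ≤ b ∧ 0 ≤ j then coeff (μ (a-2) (b-1) (j-0)) h3 else 0) +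
      ((if 2 ≤ a ∧ 0 ≤ b ∧ 1 ≤ j then coeff (μ (a-2) (b-0) (j-1)) h4 else 0) -
       (if 1 ≤ a ∧ 2 ≤ b ∧ 0 ≤ j then coeff (μ (a-1) (b-2) (j-0)) h4 else 0)) := by
    intro a b j
    rw [E]
    simp only [coeff_add, coeff_sub, coeff_mul_g]
  -- c 0
  have hc0 : c 0 = 0 := by
    ext j
    have := key 0 0 j
    rw [coeff_T] at this
    norm_num at this
    simpa using this
  have hc1 : c 1 = 0 := by
    ext j
    have := key 0 1 j
    rw [coeff_T] at this
    norm_num at this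
    simpa using this
  have hc2 : c 2 = 0 := by
    ext j
    have := key 0 2 j
    rw [coeff_T] at this
    norm_num at this
    simpa using this
  have hc3 : c 3 = 0 := by
    ext j
    have := key 1 0 j
    rw [coeff_T] at this
    norm_num at this
    simpa using this
  have hc4 : c 4 = 0 := by
    ext j
    have := key 1 1 j
    rw [coeff_T] at this
    norm_num at this
    simpa using this
  have hh4 : ∀ j, coeff (μ 0 0 j) h4 = 0 := by
    intro j
    have := key 1 2 j
    rw [coeff_T] at this
    norm_num at this
    simpa using this
  have hc5 : c 5 = 0 := by
    ext j
    have := key 2 0 j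
    rw [coeff_T] at this
    norm_num at this
    by_cases hj : 1 ≤ j
    · rw [if_pos hj] at this
      rw [hh4] at this
      simpa using this
    · rw [if_neg hj] at this
      simpa using this
  intro i
  fin_cases i <;> assumption

noncomputable def π : MvPolynomial (Fin 3) k →ₐ[k] Polynomial k :=
  aeval ![0, 0, Polynomial.X]

lemma sub_mem_span_XY (f : MvPolynomial (Fin 3) k) :
    f - emb (π f) ∈ Ideal.span {(X 0 : MvPolynomial (Fin 3) k), X 1} := by
  induction f using MvPolynomial.induction_on with
  | C a => simp [π, emb]
  | add p q hp hq =>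
    have h : p + q - emb (π (p + q)) = (p - emb (π p)) + (q - emb (π q)) := by
      simp only [map_add]; ring
    rw [h]; exact Ideal.add_mem _ hp hq
  | mul_X p i hp =>
    fin_cases i
    · have h : π (p * X 0) = 0 := by simp [π]
      show p * X 0 - emb (π (p * X 0)) ∈ _
      rw [h, map_zero, sub_zero]
      exact Ideal.mul_mem_left _ _ (Ideal.subset_span (by simp))
    · have h : π (p * X 1) = 0 := by simp [π]
      show p * X 1 - emb (π (p * X 1)) ∈ _
      rw [h, map_zero, sub_zero]
      exact Ideal.mul_mem_left _ _ (Ideal.subset_span (by simp))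
    · have h : p * X 2 - emb (π (p * X 2)) = (p - emb (π p)) * X 2 := by
        simp only [π, map_mul, aeval_X, emb, Matrix.cons_val_two, Matrix.tail_cons,
          Matrix.head_cons, Polynomial.aeval_X]
        ring
      show p * X 2 - emb (π (p * X 2)) ∈ _
      rw [h]
      exact Ideal.mul_mem_right _ _ hp

lemma x2y2_mem : ((X 0 : MvPolynomial (Fin 3) k) ^ 2 * X 1 ^ 2) ∈ (Ide : Ideal (MvPolynomial (Fin 3) k)) := by
  have h : (X 0 : MvPolynomial (Fin 3) k) ^ 2 * X 1 ^ 2 =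
      X 2 * (X 0 ^ 3) - X 0 * (X 0 ^ 2 * X 2 - X 0 * X 1 ^ 2) := by ring
  rw [h]
  exact Ideal.sub_mem _ (Ideal.mul_mem_left _ _ g1_mem) (Ideal.mul_mem_left _ _ g4_mem)

lemma xy3_mem : ((X 0 : MvPolynomial (Fin 3) k) * X 1 ^ 3) ∈ (Ide : Ideal (MvPolynomial (Fin 3) k)) := by
  have h : (X 0 : MvPolynomial (Fin 3) k) * X 1 ^ 3 =
      X 2 * (X 0 ^ 2 * X 1) - X 1 * (X 0 ^ 2 * X 2 - X 0 * X 1 ^ 2) := by ring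
  rw [h]
  exact Ideal.sub_mem _ (Ideal.mul_mem_left _ _ g3_mem) (Ideal.mul_mem_left _ _ g4_mem)

lemma pow4_mem {n : MvPolynomial (Fin 3) k}
    (hn : n ∈ Ideal.span {(X 0 : MvPolynomial (Fin 3) k), X 1}) :
    n ^ 4 ∈ (Ide : Ideal (MvPolynomial (Fin 3) k)) := by
  obtain ⟨u, v, huv⟩ := Ideal.mem_span_pair.mp hn
  have e : n ^ 4 = (u ^ 4 * X 0) * (X 0 ^ 3) + (4 * u ^ 3 * v * X 1) * (X 0 ^ 3) +
      (6 * u ^ 2 * v ^ 2) * (X 0 ^ 2 * X 1 ^ 2) + (4 * u * v ^ 3) * (X 0 * X 1 ^ 3) +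
      (v ^ 4 * X 1) * (X 1 ^ 3) := by
    rw [← huv]; ring
  rw [e]
  exact Ideal.add_mem _ (Ideal.add_mem _ (Ideal.add_mem _ (Ideal.add_mem _
    (Ideal.mul_mem_left _ _ g1_mem) (Ideal.mul_mem_left _ _ g1_mem))
    (Ideal.mul_mem_left _ _ x2y2_mem)) (Ideal.mul_mem_left _ _ xy3_mem))
    (Ideal.mul_mem_left _ _ g2_mem)

lemma core {a : MvPolynomial (Fin 3) k} {q : Polynomial k} (hq : q ≠ 0)
    (h : a * emb q ∈ (Ide : Ideal (MvPolynomial (Fin 3) k))) :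
    a ∈ (Ide : Ideal (MvPolynomial (Fin 3) k)) := by
  obtain ⟨c, hc⟩ := normal_form a
  have h2 : T (fun i => q * c i) ∈ (Ide : Ideal (MvPolynomial (Fin 3) k)) := by
    have hT : T (fun i => q * c i) = emb q * T c := by
      simp only [T, map_mul]; ring
    have h3 : emb q * T c = a * emb q - (a - T c) * emb q := by ring
    rw [hT, h3]
    exact Ideal.sub_mem _ h (Ideal.mul_mem_right _ _ hc)
  have hci := indep _ h2
  have hc0 : ∀ i, c i = 0 := fun i => (mul_eq_zero.mp (hci i)).resolve_left hq
  have hTc : T c = 0 := by simp [T, hc0]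
  rw [hTc, sub_zero] at hc
  exact hc

lemma Ide_ne_top : (Ide : Ideal (MvPolynomial (Fin 3) k)) ≠ ⊤ := by
  intro htop
  have h1 : (1 : MvPolynomial (Fin 3) k) ∈ (Ide : Ideal (MvPolynomial (Fin 3) k)) := by
    rw [htop]; trivial
  have hle : (Ide : Ideal (MvPolynomial (Fin 3) k)) ≤
      RingHom.ker (aeval (fun _ => (0:k)) : MvPolynomial (Fin 3) k →ₐ[k] k).toRingHom := by
    rw [Ide]
    refine Ideal.span_le.mpr ?_
    rintro t (rfl | rfl | rfl | rfl) <;> simp [RingHom.mem_ker]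
  have := hle h1
  rw [RingHom.mem_ker] at this
  simp at this

lemma rad_XY : Ideal.span {(X 0 : MvPolynomial (Fin 3) k), X 1} ≤
    (Ide : Ideal (MvPolynomial (Fin 3) k)).radical := by
  refine Ideal.span_le.mpr ?_
  rintro t (rfl | rfl)
  · exact ⟨3, g1_mem⟩
  · exact ⟨3, g2_mem⟩


end Stmt0Aux

open Stmt0Aux in
theorem stmt0 (k : Type*) [Field k] :
    (Ideal.span {(X 0 : MvPolynomial (Fin 3) k) ^ 3, X 1 ^ 3, X 0 ^ 2 * X 1,
      X 0 ^ 2 * X 2 - X 0 * X 1 ^ 2}).IsPrimary := by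
  have hI : (Ideal.span {(X 0 : MvPolynomial (Fin 3) k) ^ 3, X 1 ^ 3, X 0 ^ 2 * X 1,
      X 0 ^ 2 * X 2 - X 0 * X 1 ^ 2}) = (Ide : Ideal (MvPolynomial (Fin 3) k)) := rfl
  rw [hI, Ideal.isPrimary_iff]
  refine ⟨Ide_ne_top, ?_⟩
  intro a b hab
  by_cases hb : b ∈ (Ide : Ideal (MvPolynomial (Fin 3) k)).radical
  · exact Or.inr hb
  · left
    have hsub := sub_mem_span_XY b
    have hp : π b ≠ 0 := by
      intro h0
      apply hb
      apply rad_XY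
      rw [h0, map_zero, sub_zero] at hsub
      exact hsub
    set n := b - emb (π b) with hn
    have hn4 : n ^ 4 ∈ (Ide : Ideal (MvPolynomial (Fin 3) k)) := pow4_mem hsub
    have key : a * emb ((π b) ^ 4) =
        (a * b) * (b ^ 3 - 4 * b ^ 2 * n + 6 * b * n ^ 2 - 4 * n ^ 3) + a * n ^ 4 := by
      have hb0 : emb (π b) = b - n := by rw [hn]; ring
      rw [map_pow, hb0]; ring
    have hmem : a * emb ((π b) ^ 4) ∈ (Ide : Ideal (MvPolynomial (Fin 3) k)) := by
      rw [key]
      exact Ideal.add_mem _ (Ideal.mul_mem_right _ _ hab) (Ideal.mul_mem_left _ _ hn4)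
    exact core (pow_ne_zero 4 hp) hmem
end

section
/- For every positive integer n, the ideal I = ⟨x³, y³, x²y, x²zⁿ - xy²⟩ in k[x,y,z] over a field k is primary. -/
/-!
Write `A = k[z]` and view `k[x,y,z]` as `A[y][x]`. Modulo `I`, using `x y² ≡ zⁿ x²`, every
polynomial reduces to an `A`-combination of `1, x, y, xy, y², x²`, and these six coefficients
vanish exactly on `I`; so `k[x,y,z] / I` is a free `A`-module and multiplication by a nonzero
`s ∈ A` is injective on it. Since `x³, y³ ∈ I`, every `b` is `s ∈ A` plus a nilpotent modulo `I`.
If `a b ∈ I` and `b ∉ √I`, then `s ≠ 0`, and expanding `s = b - (b - s)` gives `sᵐ a ∈ I`,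
hence `a ∈ I`.
-/

namespace Ideal

theorem isPrimary_of_forall_sub_algebraMap_mem {A R : Type*} [CommRing A] [CommRing R]
    [Algebra A R] {Q P : Ideal R} (hQ : Q ≠ ⊤) (hP : P ≤ Q.radical)
    (hdecomp : ∀ b : R, ∃ s : A, b - algebraMap A R s ∈ P)
    (hreg : ∀ s : A, s ≠ 0 → ∀ a : R, algebraMap A R s * a ∈ Q → a ∈ Q) : Q.IsPrimary := by
  refine isPrimary_iff.2 ⟨hQ, fun {a b} hab => ?_⟩
  obtain ⟨s, hs⟩ := hdecomp b
  by_cases hs0 : s = 0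
  · exact .inr (hP (by simpa [hs0] using hs))
  left
  set u := algebraMap A R s
  obtain ⟨m, hm⟩ := hP hs
  -- `u ^ m ≡ (u - b) ^ m = ± (b - u) ^ m` modulo `b`
  have hum : u ^ m * a ∈ Q := by
    obtain ⟨c, hc⟩ := sub_dvd_pow_sub_pow u (u - b) m
    have : u ^ m * a = c * (a * b) + (-1) ^ m * a * (b - u) ^ m := by
      rw [← neg_sub b u, neg_pow, sub_neg_eq_add, add_sub_cancel] at hc
      linear_combination a * hc
    rw [this]
    exact add_mem (mul_mem_left _ _ hab) (mul_mem_left _ _ hm)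
  clear hm
  induction m with
  | zero => simpa using hum
  | succ m ih => exact ih (hreg s hs0 _ (by rwa [pow_succ', mul_assoc] at hum))

end Ideal

section

open Polynomial

namespace Polynomial

theorem exists_eq_C_coeff_add_X_pow_three_mul {R : Type*} [CommRing R] (p : R[X]) :
    ∃ q, p = C (p.coeff 0) + C (p.coeff 1) * X + C (p.coeff 2) * X ^ 2 + X ^ 3 * q := by
  obtain ⟨q, hq⟩ : X ^ 3 ∣ p - (C (p.coeff 0) + C (p.coeff 1) * X + C (p.coeff 2) * X ^ 2) := by
    rw [X_pow_dvd_iff]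
    intro d hd
    interval_cases d <;> simp [coeff_X, coeff_C, coeff_X_pow]
  exact ⟨q, by rw [← hq]; ring⟩

open Finset in
theorem coeff_coeff_mul {R : Type*} [Semiring R] (f g : R[X][X]) (i j : ℕ) :
    ((f * g).coeff i).coeff j = ∑ p ∈ antidiagonal i, ∑ q ∈ antidiagonal j,
      (f.coeff p.1).coeff q.1 * (g.coeff p.2).coeff q.2 := by
  simp only [coeff_mul, finsetSum_coeff]

end Polynomial

section

variable {A : Type*} [CommRing A]

/-- In `A[X][X]` the outer variable plays `x` and the inner one `C X` plays `y`. -/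
noncomputable def relIdeal (t : A) : Ideal A[X][X] :=
  Ideal.span {X ^ 3, C X ^ 3, X ^ 2 * C X, X ^ 2 * C (C t) - X * C X ^ 2}

/-- The coordinates of `f` modulo `relIdeal t` in the basis `1, x, y, xy, y², x²` vanish; the
`x²`-coordinate picks up `t` times the `xy²`-coefficient because `x y² ≡ t x²`. -/
def RelCoeffsVanish (t : A) (f : A[X][X]) : Prop :=
  (f.coeff 0).coeff 0 = 0 ∧ (f.coeff 1).coeff 0 = 0 ∧ (f.coeff 0).coeff 1 = 0 ∧
    (f.coeff 1).coeff 1 = 0 ∧ (f.coeff 0).coeff 2 = 0 ∧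
    (f.coeff 2).coeff 0 + t * (f.coeff 1).coeff 2 = 0

theorem RelCoeffsVanish.mul_left {t : A} {f : A[X][X]} (hf : RelCoeffsVanish t f) (r : A[X][X]) :
    RelCoeffsVanish t (r * f) := by
  obtain ⟨h00, h10, h01, h11, h02, h2⟩ := hf
  simp only [RelCoeffsVanish, coeff_coeff_mul, Finset.Nat.sum_antidiagonal_eq_sum_range_succ_mk,
    Finset.sum_range_succ, Finset.sum_range_zero]
  simp only [h00, h10, h01, h11, h02, mul_zero, zero_add, add_zero, Nat.sub_zero, true_and]
  linear_combination (r.coeff 0).coeff 0 * h2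

theorem RelCoeffsVanish.of_mem_relIdeal {t : A} {f : A[X][X]} (hf : f ∈ relIdeal t) :
    RelCoeffsVanish t f := by
  refine Submodule.span_induction ?_ ?_ (fun f g _ _ hf hg => ?_) (fun r f _ hf => hf.mul_left r) hf
  · rintro g (rfl | rfl | rfl | rfl) <;>
      simp [RelCoeffsVanish, ← C_pow, -map_pow, coeff_C, coeff_X, coeff_X_pow]
  · simp [RelCoeffsVanish]
  · obtain ⟨f00, f10, f01, f11, f02, f2⟩ := hf
    obtain ⟨g00, g10, g01, g11, g02, g2⟩ := hg
    simp only [RelCoeffsVanish, coeff_add, f00, f10, f01, f11, f02, g00, g10, g01, g11, g02,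
      add_zero, true_and]
    linear_combination f2 + g2

theorem RelCoeffsVanish.mem_relIdeal {t : A} {f : A[X][X]} (hf : RelCoeffsVanish t f) :
    f ∈ relIdeal t := by
  obtain ⟨h00, h10, h01, h11, h02, h2⟩ := hf
  obtain ⟨g, hg⟩ := exists_eq_C_coeff_add_X_pow_three_mul f
  obtain ⟨q0, hq0⟩ := exists_eq_C_coeff_add_X_pow_three_mul (f.coeff 0)
  obtain ⟨q1, hq1⟩ := exists_eq_C_coeff_add_X_pow_three_mul (f.coeff 1)
  obtain ⟨q2, hq2⟩ := exists_eq_C_coeff_add_X_pow_three_mul (f.coeff 2)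
  rw [h00, h01, h02] at hq0
  rw [h10, h11] at hq1
  rw [eq_neg_of_add_eq_zero_left h2] at hq2
  apply_fun C at hq0 hq1 hq2
  simp only [map_add, map_mul, map_pow, map_neg, map_zero] at hq0 hq1 hq2
  have hcomb : f = g * X ^ 3 + (C q0 + X * C q1 + X ^ 2 * C q2) * C X ^ 3
      + (C (C ((f.coeff 2).coeff 1)) + C (C ((f.coeff 2).coeff 2)) * C X) * (X ^ 2 * C X)
      - C (C ((f.coeff 1).coeff 2)) * (X ^ 2 * C (C t) - X * C X ^ 2) := by
    linear_combination hg + hq0 + X * hq1 + X ^ 2 * hq2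
  rw [hcomb, relIdeal]
  refine sub_mem (add_mem (add_mem ?_ ?_) ?_) ?_ <;>
    exact Ideal.mul_mem_left _ _ (Ideal.subset_span (by simp))

theorem mem_relIdeal_iff {t : A} {f : A[X][X]} : f ∈ relIdeal t ↔ RelCoeffsVanish t f :=
  ⟨RelCoeffsVanish.of_mem_relIdeal, RelCoeffsVanish.mem_relIdeal⟩

theorem relIdeal_ne_top [Nontrivial A] (t : A) : relIdeal t ≠ ⊤ := by
  intro h
  have := (mem_relIdeal_iff.1 (h ▸ Submodule.mem_top : (1 : A[X][X]) ∈ relIdeal t)).1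
  simp at this

theorem mem_relIdeal_of_C_C_mul_mem [IsDomain A] {t s : A} (hs : s ≠ 0) {f : A[X][X]}
    (h : C (C s) * f ∈ relIdeal t) : f ∈ relIdeal t := by
  simp only [mem_relIdeal_iff, RelCoeffsVanish, coeff_C_mul, mul_eq_zero, hs, false_or] at h ⊢
  obtain ⟨h00, h10, h01, h11, h02, h2⟩ := h
  refine ⟨h00, h10, h01, h11, h02, (mul_eq_zero.1 ?_).resolve_left hs⟩
  linear_combination h2

theorem sub_C_C_coeff_mem_span_X_C_X (f : A[X][X]) :
    f - C (C ((f.coeff 0).coeff 0)) ∈ Ideal.span {X, C X} := by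
  have hf := X_mul_divX_add f
  have hf0 := congrArg C (X_mul_divX_add (f.coeff 0))
  simp only [map_add, map_mul] at hf0
  rw [show f - C (C ((f.coeff 0).coeff 0)) = divX f * X + C (divX (f.coeff 0)) * C X by
    linear_combination -hf - hf0]
  exact add_mem (Ideal.mul_mem_left _ _ (Ideal.subset_span (by simp)))
    (Ideal.mul_mem_left _ _ (Ideal.subset_span (by simp)))

theorem span_X_C_X_le_radical_relIdeal (t : A) : Ideal.span {X, C X} ≤ (relIdeal t).radical := by
  rw [Ideal.span_le]
  rintro g (rfl | rfl) <;> exact ⟨3, Ideal.subset_span (by simp)⟩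

theorem isPrimary_relIdeal [IsDomain A] (t : A) : (relIdeal t).IsPrimary :=
  Ideal.isPrimary_of_forall_sub_algebraMap_mem (relIdeal_ne_top t)
    (span_X_C_X_le_radical_relIdeal t)
    (fun f => ⟨(f.coeff 0).coeff 0, by simpa using sub_C_C_coeff_mem_span_X_C_X f⟩)
    (fun s hs f hf => mem_relIdeal_of_C_C_mul_mem hs (by simpa using hf))

end

section

variable (k : Type*) [CommRing k]

noncomputable def finThreeEquiv : MvPolynomial (Fin 3) k ≃ₐ[k] k[X][X][X] :=
  (MvPolynomial.finSuccEquiv k 2).trans <| mapAlgEquiv <|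
    (MvPolynomial.finSuccEquiv k 1).trans <| mapAlgEquiv <|
      (MvPolynomial.finSuccEquiv k 0).trans <| mapAlgEquiv (MvPolynomial.isEmptyAlgEquiv k (Fin 0))

@[simp]
theorem finThreeEquiv_X_zero : finThreeEquiv k (MvPolynomial.X 0) = X := by
  simp [finThreeEquiv, MvPolynomial.finSuccEquiv_X_zero, coe_mapAlgEquiv]

@[simp]
theorem finThreeEquiv_X_one : finThreeEquiv k (MvPolynomial.X 1) = C X := by
  rw [finThreeEquiv, AlgEquiv.trans_apply, show (1 : Fin 3) = Fin.succ 0 from rfl,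
    MvPolynomial.finSuccEquiv_X_succ]
  simp [MvPolynomial.finSuccEquiv_X_zero, coe_mapAlgEquiv]

@[simp]
theorem finThreeEquiv_X_two : finThreeEquiv k (MvPolynomial.X 2) = C (C X) := by
  rw [finThreeEquiv, AlgEquiv.trans_apply, show (2 : Fin 3) = Fin.succ 1 from rfl,
    MvPolynomial.finSuccEquiv_X_succ]
  have hX1 : (MvPolynomial.X 1 : MvPolynomial (Fin 2) k) = MvPolynomial.X (Fin.succ 0) := rfl
  simp [coe_mapAlgEquiv, hX1, MvPolynomial.finSuccEquiv_X_succ, MvPolynomial.finSuccEquiv_X_zero]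

end

end

open MvPolynomial

theorem stmt2_general (k : Type*) [Field k] (n : ℕ) :
    (Ideal.span {(X 0 : MvPolynomial (Fin 3) k) ^ 3, X 1 ^ 3, X 0 ^ 2 * X 1,
      X 0 ^ 2 * X 2 ^ n - X 0 * X 1 ^ 2}).IsPrimary := by
  set e := (finThreeEquiv k : MvPolynomial (Fin 3) k →+* Polynomial (Polynomial (Polynomial k)))
  convert (isPrimary_relIdeal (Polynomial.X ^ n : Polynomial k)).comap e
  refine (Ideal.comap_map_of_bijective e (finThreeEquiv k).bijective).symm.trans (congrArg _ ?_)
  simp [Ideal.map_span, Set.image_insert_eq, relIdeal, e]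

theorem stmt2 (k : Type*) [Field k] (n : ℕ) (hn : 0 < n) :
    (Ideal.span {(X 0 : MvPolynomial (Fin 3) k) ^ 3, X 1 ^ 3, X 0 ^ 2 * X 1,
      X 0 ^ 2 * X 2 ^ n - X 0 * X 1 ^ 2}).IsPrimary :=
  stmt2_general k n
end

section
/- For every positive integer n, the element xy² is integral over the ideal I = ⟨x³, y³, x²y, x²zⁿ - xy²⟩ in k[x,y,z], and hence x²zⁿ = (x²zⁿ - xy²) + xy² lies in the integral closure of I. -/
open MvPolynomial

/-- An element `r` is integral over the ideal `I`: there is an equation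
`r ^ n + a 1 * r ^ (n-1) + ⋯ + a n = 0` with `a i ∈ I ^ i` and `n ≥ 1`. -/
def IdealIntegral {R : Type*} [CommRing R] (I : Ideal R) (r : R) : Prop :=
  ∃ n : ℕ, 0 < n ∧ ∃ a : ℕ → R, (∀ i, a i ∈ I ^ i) ∧
    r ^ n + ∑ i ∈ Finset.range n, a (i + 1) * r ^ (n - (i + 1)) = 0

theorem stmt5 (k : Type*) [Field k] (n : ℕ) (hn : 0 < n) :
    IdealIntegral (Ideal.span {(X 0 : MvPolynomial (Fin 3) k) ^ 3, X 1 ^ 3,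
        X 0 ^ 2 * X 1, X 0 ^ 2 * X 2 ^ n - X 0 * X 1 ^ 2}) (X 0 * X 1 ^ 2) ∧
    IdealIntegral (Ideal.span {(X 0 : MvPolynomial (Fin 3) k) ^ 3, X 1 ^ 3,
        X 0 ^ 2 * X 1, X 0 ^ 2 * X 2 ^ n - X 0 * X 1 ^ 2}) (X 0 ^ 2 * X 2 ^ n) := by
  set I : Ideal (MvPolynomial (Fin 3) k) :=
    Ideal.span {(X 0 : MvPolynomial (Fin 3) k) ^ 3, X 1 ^ 3,
        X 0 ^ 2 * X 1, X 0 ^ 2 * X 2 ^ n - X 0 * X 1 ^ 2} with hI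
  have hx : (X 0 : MvPolynomial (Fin 3) k) ^ 3 ∈ I :=
    Ideal.subset_span (by simp)
  have hy : (X 1 : MvPolynomial (Fin 3) k) ^ 3 ∈ I :=
    Ideal.subset_span (by simp)
  have hg : (X 0 : MvPolynomial (Fin 3) k) ^ 2 * X 2 ^ n - X 0 * X 1 ^ 2 ∈ I :=
    Ideal.subset_span (by simp)
  set g : MvPolynomial (Fin 3) k := X 0 ^ 2 * X 2 ^ n - X 0 * X 1 ^ 2 with hgdef
  have hcube : (X 0 : MvPolynomial (Fin 3) k) ^ 3 * X 1 ^ 3 * X 1 ^ 3 ∈ I ^ 3 := by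
    have : I ^ 3 = I * I * I := by ring
    rw [this]
    exact Ideal.mul_mem_mul (Ideal.mul_mem_mul hx hy) hy
  constructor
  · refine ⟨3, by norm_num, fun i => if i = 3 then -(X 0 ^ 3 * X 1 ^ 3 * X 1 ^ 3) else 0,
      fun i => ?_, ?_⟩
    · by_cases h : i = 3
      · subst h; simpa using neg_mem hcube
      · simp [h]
    · simp [Finset.sum_range_succ]
      ring
  · refine ⟨3, by norm_num, fun i =>
      if i = 1 then -(3 * g) else if i = 2 then 3 * g ^ 2
      else if i = 3 then -(g ^ 3 + X 0 ^ 3 * X 1 ^ 3 * X 1 ^ 3) else 0,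
      fun i => ?_, ?_⟩
    · by_cases h1 : i = 1
      · subst h1; simpa using neg_mem (I.mul_mem_left 3 hg)
      · by_cases h2 : i = 2
        · subst h2
          norm_num
          exact Ideal.mul_mem_left _ 3 (Ideal.pow_mem_pow hg 2)
        · by_cases h3 : i = 3
          · subst h3
            norm_num
            exact add_mem (neg_mem hcube) (neg_mem (Ideal.pow_mem_pow hg 3))
          · simp [h1, h2, h3]
    · simp [Finset.sum_range_succ, hgdef]
      ring
end

section
/- There exists an ideal I in ℚ[x,y,z] such that I is primary but the integral closure of I is not primary; one such ideal is I = ⟨x³, y³, x²y, x²z - xy²⟩. -/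
/-!
Write `x, y, z` for `X 0, X 1, X 2`. Over `ℚ[z]`, the quotient by `I` is free on the classes of
`1, x, y, xy, y², x²` (as `x³, y³, x²y ≡ 0` and `xy² ≡ z x²`), so nonzero elements of `ℚ[z]` are
nonzerodivisors modulo `I`. As `x³, y³ ∈ I`, every `b` is its constant term `p(z)` in `x, y` plus an
element of `√I`; if `p ≠ 0` and `ab ∈ I`, then `p(z)ⁿ a ∈ I` for some `n`, hence `a ∈ I`. So `I` is
primary.

The element `x²z` is integral over `I`: it differs from `x²z - xy² ∈ I` by `xy²`, whose cube lies
in `I³`. But `x²` is not (sending every variable to `t` maps `I` into `(t³)`, over which `t²` is not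
integral), and no power of `z` is, since `z ∉ √I`. So the integral closure of `I` is not primary.
-/

open MvPolynomial

namespace IdealIntegral

variable {R S : Type*} [CommRing R] [CommRing S] {I K : Ideal R} {r : R}

theorem mono (h : I ≤ K) (hr : IdealIntegral I r) : IdealIntegral K r := by
  obtain ⟨n, hn, a, ha, hr⟩ := hr
  exact ⟨n, hn, a, fun i => Ideal.pow_right_mono h i (ha i), hr⟩

theorem map (φ : R →+* S) (hr : IdealIntegral I r) : IdealIntegral (I.map φ) (φ r) := by
  obtain ⟨n, hn, a, ha, hr⟩ := hr
  refine ⟨n, hn, fun i => φ (a i), fun i => Ideal.map_pow φ I i ▸ Ideal.mem_map_of_mem φ (ha i), ?_⟩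
  simpa using congrArg φ hr

theorem mem_radical (hr : IdealIntegral I r) : r ∈ I.radical := by
  obtain ⟨n, -, a, ha, hr⟩ := hr
  refine ⟨n, ?_⟩
  rw [eq_neg_of_add_eq_zero_left hr]
  exact neg_mem <| Ideal.sum_mem _ fun i _ =>
    Ideal.mul_mem_right _ _ (Ideal.pow_le_self i.succ_ne_zero (ha _))

theorem of_sub_pow_mem {g : R} {n : ℕ} (hn : 0 < n) (hg : g ∈ I) (h : (r - g) ^ n ∈ I ^ n) :
    IdealIntegral I r := by
  refine ⟨n, hn, fun i => (-g) ^ i * n.choose i - if i = n then (r - g) ^ n else 0,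
    fun i => Ideal.sub_mem _ (Ideal.mul_mem_right _ _ (Ideal.pow_mem_pow (neg_mem hg) i)) ?_, ?_⟩
  · split_ifs with hi
    · exact hi ▸ h
    · exact zero_mem _
  · have hbinom : ∑ i ∈ Finset.range n, (-g) ^ (i + 1) * n.choose (i + 1) * r ^ (n - (i + 1))
        = (r - g) ^ n - r ^ n := by
      rw [show r - g = -g + r by ring, add_pow, Finset.sum_range_succ']
      simp [mul_right_comm]
    have hlast : ∑ i ∈ Finset.range n, (if i + 1 = n then (r - g) ^ n else 0) * r ^ (n - (i + 1))
        = (r - g) ^ n := by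
      obtain ⟨m, rfl⟩ := Nat.exists_eq_add_of_lt hn
      rw [Finset.sum_range_succ, Finset.sum_eq_zero fun i hi => by
        rw [if_neg (by simp at hi; omega), zero_mul]]
      simp
    simp only [sub_mul, Finset.sum_sub_distrib, hbinom, hlast]
    ring

end IdealIntegral

theorem not_idealIntegral_pow_span_pow {R : Type*} [CommRing R] [IsDomain R] {x : R}
    (hx₀ : x ≠ 0) (hx : ¬IsUnit x) {a b : ℕ} (hab : a < b) :
    ¬IdealIntegral (Ideal.span {x ^ b}) (x ^ a) := by
  rintro ⟨n, -, c, hc, hrel⟩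
  have hdvd : x ^ (a * n + 1) ∣ x ^ (a * n) := by
    rw [pow_mul, eq_neg_of_add_eq_zero_left hrel, dvd_neg]
    refine Finset.dvd_sum fun i hi => ?_
    have hci : x ^ (b * (i + 1)) ∣ c (i + 1) := by
      have := hc (i + 1)
      rwa [Ideal.span_singleton_pow, Ideal.mem_span_singleton, ← pow_mul] at this
    have hi : i < n := Finset.mem_range.mp hi
    have hexp : a * n + 1 ≤ b * (i + 1) + a * (n - (i + 1)) := by
      obtain ⟨k, rfl⟩ := Nat.exists_eq_add_of_lt hi
      rw [show i + k + 1 - (i + 1) = k by omega]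
      nlinarith
    rw [← pow_mul]
    exact (pow_dvd_pow x hexp).trans (pow_add x _ _ ▸ mul_dvd_mul hci dvd_rfl)
  exact absurd ((pow_dvd_pow_iff hx₀ hx).mp hdvd) (by omega)

theorem Ideal.exists_pow_mul_mem_of_mul_mem {R : Type*} [CommRing R] {I : Ideal R} {a b c : R}
    (hab : a * b ∈ I) (hbc : b - c ∈ I.radical) : ∃ n, c ^ n * a ∈ I := by
  obtain ⟨n, hn⟩ : c - b ∈ I.radical := neg_sub b c ▸ I.radical.neg_mem hbc
  obtain ⟨d, hd⟩ : b ∣ c ^ n - (c - b) ^ n := by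
    simpa using sub_dvd_pow_sub_pow c (c - b) n
  refine ⟨n, ?_⟩
  have : c ^ n * a = d * (a * b) + (c - b) ^ n * a := by linear_combination a * hd
  exact this ▸ I.add_mem (I.mul_mem_left d hab) (I.mul_mem_right a hn)

section

variable {B : Type*} [CommRing B]

noncomputable def xyExp (i j : ℕ) : Fin 2 →₀ ℕ := Finsupp.single 0 i + Finsupp.single 1 j

@[simp] lemma xyExp_apply_zero (i j : ℕ) : xyExp i j 0 = i := by simp [xyExp]
@[simp] lemma xyExp_apply_one (i j : ℕ) : xyExp i j 1 = j := by simp [xyExp]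

lemma xyExp_zero_zero : xyExp 0 0 = 0 := by simp [xyExp]

lemma eq_xyExp (m : Fin 2 →₀ ℕ) : m = xyExp (m 0) (m 1) := by
  ext k; fin_cases k <;> simp

@[simp] lemma xyExp_inj {i j k l : ℕ} : xyExp i j = xyExp k l ↔ i = k ∧ j = l := by
  refine ⟨fun h => ⟨by simpa using congrArg (· 0) h, by simpa using congrArg (· 1) h⟩, ?_⟩
  rintro ⟨rfl, rfl⟩; rfl

@[simp] lemma xyExp_le_xyExp {i j k l : ℕ} : xyExp i j ≤ xyExp k l ↔ i ≤ k ∧ j ≤ l := by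
  simp [Finsupp.le_def, Fin.forall_fin_two]

@[simp] lemma xyExp_sub_xyExp (i j k l : ℕ) : xyExp k l - xyExp i j = xyExp (k - i) (l - j) := by
  ext m; fin_cases m <;> simp

lemma monomial_xyExp (i j : ℕ) (b : B) :
    monomial (xyExp i j) b = C b * X 0 ^ i * X 1 ^ j := by
  rw [monomial_eq, Finsupp.prod_fintype _ _ (by simp), Fin.prod_univ_two, mul_assoc]
  simp

lemma coeff_xyExp_mul_monomial (p : MvPolynomial (Fin 2) B) (i j k l : ℕ) (b : B) :
    coeff (xyExp k l) (p * monomial (xyExp i j) b) =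
      if i ≤ k ∧ j ≤ l then coeff (xyExp (k - i) (l - j)) p * b else 0 := by
  simp [coeff_mul_monomial']

lemma mem_span_monomials_of_coeff_eq_zero {f : MvPolynomial (Fin 2) B}
    (hf : ∀ i j, i ≤ 2 → j ≤ 2 → i ≤ 1 ∨ j = 0 → coeff (xyExp i j) f = 0) :
    f ∈ Ideal.span {X 0 ^ 3, X 1 ^ 3, X 0 ^ 2 * X 1} := by
  have hspan : Ideal.span {X 0 ^ 3, X 1 ^ 3, X 0 ^ 2 * X 1} =
      Ideal.span ((fun s => monomial s (1 : B)) '' {xyExp 3 0, xyExp 0 3, xyExp 2 1}) := by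
    simp [Set.image_insert_eq, monomial_xyExp]
  rw [hspan, mem_ideal_span_monomial_image]
  intro m hm
  contrapose! hm
  simp only [Set.mem_insert_iff, Set.mem_singleton_iff, forall_eq_or_imp, forall_eq] at hm
  rw [eq_xyExp m] at hm ⊢
  simp only [xyExp_le_xyExp] at hm
  rw [notMem_support_iff]
  exact hf _ _ (by omega) (by omega) (by omega)

lemma sub_C_coeff_zero_mem_idealOfVars (b : MvPolynomial (Fin 2) B) :
    b - C (coeff 0 b) ∈ idealOfVars (Fin 2) B := by
  rw [← pow_one (idealOfVars _ _), mem_pow_idealOfVars_iff']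
  intro m hm
  obtain rfl : m = 0 := by simpa [Nat.lt_one_iff, Finsupp.degree_eq_zero_iff] using hm
  simp

variable (t : B)

noncomputable def xyIdeal : Ideal (MvPolynomial (Fin 2) B) :=
  Ideal.span {X 0 ^ 3, X 1 ^ 3, X 0 ^ 2 * X 1, X 0 ^ 2 * C t - X 0 * X 1 ^ 2}

/-- The class of `f` modulo `xyIdeal t` has zero coordinates in the basis `1, x, y, xy, y², x²`;
since `xy² ≡ t x²`, the `x²`-coordinate is `coeff x² + t * coeff xy²`. -/
def XYIdealCond (f : MvPolynomial (Fin 2) B) : Prop :=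
  coeff (xyExp 0 0) f = 0 ∧ coeff (xyExp 1 0) f = 0 ∧ coeff (xyExp 0 1) f = 0 ∧
    coeff (xyExp 1 1) f = 0 ∧ coeff (xyExp 0 2) f = 0 ∧
    coeff (xyExp 2 0) f + t * coeff (xyExp 1 2) f = 0

lemma xyIdealCond_of_mem {f : MvPolynomial (Fin 2) B} (hf : f ∈ xyIdeal t) :
    XYIdealCond t f := by
  obtain ⟨c₁, f₁, hf₁, rfl⟩ := Ideal.mem_span_insert.mp hf
  obtain ⟨c₂, f₂, hf₂, rfl⟩ := Ideal.mem_span_insert.mp hf₁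
  obtain ⟨c₃, f₃, hf₃, rfl⟩ := Ideal.mem_span_insert.mp hf₂
  obtain ⟨c₄, rfl⟩ := Ideal.mem_span_singleton'.mp hf₃
  have h1 : (X 0 ^ 3 : MvPolynomial (Fin 2) B) = monomial (xyExp 3 0) 1 := by
    simp only [monomial_xyExp, map_one]; ring
  have h2 : (X 1 ^ 3 : MvPolynomial (Fin 2) B) = monomial (xyExp 0 3) 1 := by
    simp only [monomial_xyExp, map_one]; ring
  have h3 : (X 0 ^ 2 * X 1 : MvPolynomial (Fin 2) B) = monomial (xyExp 2 1) 1 := by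
    simp only [monomial_xyExp, map_one]; ring
  have h4 : (X 0 ^ 2 * C t - X 0 * X 1 ^ 2 : MvPolynomial (Fin 2) B) =
      monomial (xyExp 2 0) t - monomial (xyExp 1 2) 1 := by
    simp only [monomial_xyExp, map_one]; ring
  simp only [XYIdealCond, h1, h2, h3, h4, mul_sub, coeff_add, coeff_sub,
    coeff_xyExp_mul_monomial]
  norm_num
  ring

lemma mem_xyIdeal_of_xyIdealCond {f : MvPolynomial (Fin 2) B}
    (hf : XYIdealCond t f) : f ∈ xyIdeal t := by
  obtain ⟨h00, h10, h01, h11, h02, h20⟩ := hf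
  let c := coeff (xyExp 1 2) f
  have hcorr : monomial (xyExp 1 2) c - monomial (xyExp 2 0) (t * c) ∈ xyIdeal t := by
    have : monomial (xyExp 1 2) c - monomial (xyExp 2 0) (t * c) =
        -C c * (X 0 ^ 2 * C t - X 0 * X 1 ^ 2) := by
      simp only [monomial_xyExp, map_mul]; ring
    exact this ▸ Ideal.mul_mem_left _ _ (Ideal.subset_span (by simp))
  have hrest : f - (monomial (xyExp 1 2) c - monomial (xyExp 2 0) (t * c)) ∈ xyIdeal t := by
    refine Ideal.span_mono (by simp [Set.subset_def]) (mem_span_monomials_of_coeff_eq_zero ?_)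
    intro i j hi hj hij
    interval_cases i <;> interval_cases j <;> simp_all [c, coeff_monomial]
  simpa using Ideal.add_mem _ hrest hcorr

lemma idealOfVars_le_radical_xyIdeal : idealOfVars (Fin 2) B ≤ (xyIdeal t).radical := by
  rw [Ideal.span_le]
  rintro _ ⟨i, rfl⟩
  exact ⟨3, Ideal.subset_span (by fin_cases i <;> simp)⟩

variable [IsDomain B]

lemma XYIdealCond.of_C_mul {q : B} (hq : q ≠ 0) {f : MvPolynomial (Fin 2) B}
    (h : XYIdealCond t (C q * f)) : XYIdealCond t f := by
  simp only [XYIdealCond, coeff_C_mul] at h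
  obtain ⟨h00, h10, h01, h11, h02, h20⟩ := h
  have h20' : q * (coeff (xyExp 2 0) f + t * coeff (xyExp 1 2) f) = 0 := by
    linear_combination h20
  exact ⟨(mul_eq_zero.mp h00).resolve_left hq, (mul_eq_zero.mp h10).resolve_left hq,
    (mul_eq_zero.mp h01).resolve_left hq, (mul_eq_zero.mp h11).resolve_left hq,
    (mul_eq_zero.mp h02).resolve_left hq, (mul_eq_zero.mp h20').resolve_left hq⟩

theorem xyIdeal_isPrimary : (xyIdeal t).IsPrimary := by
  rw [Ideal.isPrimary_iff]
  refine ⟨fun htop => ?_, fun {a b} hab => ?_⟩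
  · have := (xyIdealCond_of_mem t (htop ▸ Submodule.mem_top : (1 : MvPolynomial _ B) ∈ _)).1
    rw [xyExp_zero_zero, coeff_zero_one] at this
    exact one_ne_zero this
  by_cases hb : coeff 0 b = 0
  · right
    simpa [hb] using idealOfVars_le_radical_xyIdeal t (sub_C_coeff_zero_mem_idealOfVars b)
  · left
    obtain ⟨n, hn⟩ := Ideal.exists_pow_mul_mem_of_mul_mem hab
      (idealOfVars_le_radical_xyIdeal t (sub_C_coeff_zero_mem_idealOfVars b))
    rw [← map_pow] at hn
    exact mem_xyIdeal_of_xyIdealCond t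
      ((xyIdealCond_of_mem t hn).of_C_mul t (pow_ne_zero n hb))

end

noncomputable def lastVarToCoeffEquiv : MvPolynomial (Fin 3) ℚ ≃ₐ[ℚ] MvPolynomial (Fin 2) (Polynomial ℚ) :=
  (renameEquiv ℚ (finSuccEquiv' 2)).trans (optionEquivRight ℚ (Fin 2))

noncomputable def xyzIdeal : Ideal (MvPolynomial (Fin 3) ℚ) :=
  Ideal.span {X 0 ^ 3, X 1 ^ 3, X 0 ^ 2 * X 1, X 0 ^ 2 * X 2 - X 0 * X 1 ^ 2}

lemma map_lastVarToCoeffEquiv_xyzIdeal : xyzIdeal.map lastVarToCoeffEquiv = xyIdeal Polynomial.X := by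
  have h0 : lastVarToCoeffEquiv (X 0) = X 0 := by simp [lastVarToCoeffEquiv]; rfl
  have h1 : lastVarToCoeffEquiv (X 1) = X 1 := by simp [lastVarToCoeffEquiv]; rfl
  have h2 : lastVarToCoeffEquiv (X 2) = C Polynomial.X := by simp [lastVarToCoeffEquiv]
  simp [xyzIdeal, xyIdeal, Ideal.map_span, Set.image_insert_eq, h0, h1, h2]

theorem xyzIdeal_isPrimary : xyzIdeal.IsPrimary := by
  rw [← Ideal.comap_map_of_bijective lastVarToCoeffEquiv lastVarToCoeffEquiv.bijective (I := xyzIdeal),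
    map_lastVarToCoeffEquiv_xyzIdeal]
  exact (xyIdeal_isPrimary Polynomial.X).comap lastVarToCoeffEquiv.toRingHom

lemma idealIntegral_xyzIdeal_X_zero_sq_mul_X_two : IdealIntegral xyzIdeal (X 0 ^ 2 * X 2) := by
  refine IdealIntegral.of_sub_pow_mem (g := X 0 ^ 2 * X 2 - X 0 * X 1 ^ 2) three_pos
    (Ideal.subset_span (by simp)) ?_
  have hx : (X 0 ^ 3 : MvPolynomial (Fin 3) ℚ) ∈ xyzIdeal := Ideal.subset_span (by simp)
  have hy : (X 1 ^ 3 : MvPolynomial (Fin 3) ℚ) ∈ xyzIdeal := Ideal.subset_span (by simp)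
  have : (X 0 ^ 2 * X 2 - (X 0 ^ 2 * X 2 - X 0 * X 1 ^ 2) : MvPolynomial (Fin 3) ℚ) ^ 3 =
      X 0 ^ 3 * (X 1 ^ 3 * X 1 ^ 3) := by ring
  rw [this, pow_three]
  exact Ideal.mul_mem_mul hx (Ideal.mul_mem_mul hy hy)

lemma not_idealIntegral_xyzIdeal_X_zero_sq : ¬IdealIntegral xyzIdeal (X 0 ^ 2) := by
  intro h
  let τ : MvPolynomial (Fin 3) ℚ →+* Polynomial ℚ := eval₂Hom Polynomial.C fun _ => Polynomial.X
  have hτ : xyzIdeal.map τ ≤ Ideal.span {Polynomial.X ^ 3} := by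
    rw [xyzIdeal, Ideal.map_span, Ideal.span_le]
    rintro _ ⟨g, hg, rfl⟩
    simp only [Set.mem_insert_iff, Set.mem_singleton_iff] at hg
    rcases hg with rfl | rfl | rfl | rfl <;> simp [τ, ← pow_succ, ← pow_succ']
  have := (h.map τ).mono hτ
  simp only [τ, map_pow, eval₂Hom_X'] at this
  exact not_idealIntegral_pow_span_pow Polynomial.X_ne_zero Polynomial.not_isUnit_X
    (by norm_num) this

lemma X_two_notMem_radical_xyzIdeal : X 2 ∉ xyzIdeal.radical := by
  rintro ⟨n, hn⟩
  let ρ : MvPolynomial (Fin 3) ℚ →+* Polynomial ℚ := eval₂Hom Polynomial.C ![0, 0, Polynomial.X]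
  have hρ : xyzIdeal ≤ RingHom.ker ρ := by
    rw [xyzIdeal, Ideal.span_le]
    intro g hg
    simp only [Set.mem_insert_iff, Set.mem_singleton_iff] at hg
    rcases hg with rfl | rfl | rfl | rfl <;> simp [ρ]
  simpa [ρ] using hρ hn

theorem stmt7 :
    ∃ I : Ideal (MvPolynomial (Fin 3) ℚ),
      I = Ideal.span {(X 0 : MvPolynomial (Fin 3) ℚ) ^ 3, X 1 ^ 3, X 0 ^ 2 * X 1,
        X 0 ^ 2 * X 2 - X 0 * X 1 ^ 2} ∧
      I.IsPrimary ∧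
      ∀ J : Ideal (MvPolynomial (Fin 3) ℚ),
        (∀ r, r ∈ J ↔ IdealIntegral I r) → ¬ J.IsPrimary := by
  refine ⟨xyzIdeal, rfl, xyzIdeal_isPrimary, fun J hJ hJ_primary => ?_⟩
  rcases (Ideal.isPrimary_iff.mp hJ_primary).2
      ((hJ _).mpr idealIntegral_xyzIdeal_X_zero_sq_mul_X_two) with hx | ⟨n, hz⟩
  · exact not_idealIntegral_xyzIdeal_X_zero_sq ((hJ _).mp hx)
  · exact X_two_notMem_radical_xyzIdeal
      (Ideal.mem_radical_of_pow_mem ((hJ _).mp hz).mem_radical)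
end

section
/- The radical of the Jacobian ideal J = ⟨x⁴t + 3z², x⁴z, y⁵, 3x⁵ + 2x³zt⟩ in ℚ[x,y,z,t] is the prime ideal ⟨x, y, z⟩. -/
open MvPolynomial

noncomputable abbrev gsub : Fin 4 → MvPolynomial (Fin 4) ℚ := ![0, 0, 0, X 3]

lemma sub_aeval_mem (f : MvPolynomial (Fin 4) ℚ) :
    f - aeval gsub f ∈ Ideal.span {(X 0 : MvPolynomial (Fin 4) ℚ), X 1, X 2} := by
  set P := Ideal.span {(X 0 : MvPolynomial (Fin 4) ℚ), X 1, X 2} with hP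
  have hX0 : (X 0 : MvPolynomial (Fin 4) ℚ) ∈ P := Ideal.subset_span (by simp)
  have hX1 : (X 1 : MvPolynomial (Fin 4) ℚ) ∈ P := Ideal.subset_span (by simp)
  have hX2 : (X 2 : MvPolynomial (Fin 4) ℚ) ∈ P := Ideal.subset_span (by simp)
  induction f using MvPolynomial.induction_on with
  | C a => simp
  | add p q hp hq =>
      have : p + q - aeval gsub (p + q) = (p - aeval gsub p) + (q - aeval gsub q) := by
        rw [map_add]; ring
      rw [this]; exact P.add_mem hp hq
  | mul_X p n hp =>
      fin_cases n
      · show p * X 0 - aeval gsub (p * X 0) ∈ P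
        have : p * X 0 - aeval gsub (p * X 0) = p * X 0 := by
          simp [gsub]
        rw [this]; exact P.mul_mem_left p hX0
      · show p * X 1 - aeval gsub (p * X 1) ∈ P
        have : p * X 1 - aeval gsub (p * X 1) = p * X 1 := by
          simp [gsub]
        rw [this]; exact P.mul_mem_left p hX1
      · show p * X 2 - aeval gsub (p * X 2) ∈ P
        have : p * X 2 - aeval gsub (p * X 2) = p * X 2 := by
          simp [gsub]
        rw [this]; exact P.mul_mem_left p hX2
      · show p * X 3 - aeval gsub (p * X 3) ∈ P
        have : p * X 3 - aeval gsub (p * X 3) = (p - aeval gsub p) * X 3 := by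
          rw [map_mul]; simp [gsub]; ring
        rw [this]; exact P.mul_mem_right _ hp

lemma P_isPrime : (Ideal.span {(X 0 : MvPolynomial (Fin 4) ℚ), X 1, X 2}).IsPrime := by
  have hker : Ideal.span {(X 0 : MvPolynomial (Fin 4) ℚ), X 1, X 2}
      = RingHom.ker (aeval gsub : MvPolynomial (Fin 4) ℚ →ₐ[ℚ] MvPolynomial (Fin 4) ℚ) := by
    apply le_antisymm
    · rw [Ideal.span_le]
      intro f hf
      simp only [Set.mem_insert_iff, Set.mem_singleton_iff] at hf
      rcases hf with rfl | rfl | rfl <;> simp [RingHom.mem_ker, gsub]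
    · intro f hf
      rw [RingHom.mem_ker] at hf
      have := sub_aeval_mem f
      rwa [hf, sub_zero] at this
  rw [hker]
  exact RingHom.ker_isPrime _

theorem stmt15 :
    (Ideal.span {(X 0 : MvPolynomial (Fin 4) ℚ) ^ 4 * X 3 + 3 * X 2 ^ 2,
        X 0 ^ 4 * X 2, X 1 ^ 5, 3 * X 0 ^ 5 + 2 * X 0 ^ 3 * X 2 * X 3}).radical
      = Ideal.span {(X 0 : MvPolynomial (Fin 4) ℚ), X 1, X 2} ∧
    (Ideal.span {(X 0 : MvPolynomial (Fin 4) ℚ), X 1, X 2}).IsPrime := by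
  set J := Ideal.span {(X 0 : MvPolynomial (Fin 4) ℚ) ^ 4 * X 3 + 3 * X 2 ^ 2,
        X 0 ^ 4 * X 2, X 1 ^ 5, 3 * X 0 ^ 5 + 2 * X 0 ^ 3 * X 2 * X 3} with hJ
  set P := Ideal.span {(X 0 : MvPolynomial (Fin 4) ℚ), X 1, X 2} with hP
  have hprime := P_isPrime
  refine ⟨le_antisymm ?_ ?_, hprime⟩
  · -- radical J ≤ P
    have hJP : J ≤ P := by
      rw [hJ, Ideal.span_le]
      intro f hf
      simp only [Set.mem_insert_iff, Set.mem_singleton_iff] at hf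
      have hX0 : (X 0 : MvPolynomial (Fin 4) ℚ) ∈ P := Ideal.subset_span (by simp)
      have hX2 : (X 2 : MvPolynomial (Fin 4) ℚ) ∈ P := Ideal.subset_span (by simp)
      have hX1 : (X 1 : MvPolynomial (Fin 4) ℚ) ∈ P := Ideal.subset_span (by simp)
      rcases hf with rfl | rfl | rfl | rfl
      · have : (X 0 : MvPolynomial (Fin 4) ℚ) ^ 4 * X 3 + 3 * X 2 ^ 2
            = (X 0 ^ 3 * X 3) * X 0 + (3 * X 2) * X 2 := by ring
        rw [this]; exact P.add_mem (P.mul_mem_left _ hX0) (P.mul_mem_left _ hX2)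
      · have : (X 0 : MvPolynomial (Fin 4) ℚ) ^ 4 * X 2 = (X 0 ^ 4) * X 2 := by ring
        rw [this]; exact P.mul_mem_left _ hX2
      · have : (X 1 : MvPolynomial (Fin 4) ℚ) ^ 5 = (X 1 ^ 4) * X 1 := by ring
        rw [this]; exact P.mul_mem_left _ hX1
      · have : (3 : MvPolynomial (Fin 4) ℚ) * X 0 ^ 5 + 2 * X 0 ^ 3 * X 2 * X 3
            = (3 * X 0 ^ 4 + 2 * X 0 ^ 2 * X 2 * X 3) * X 0 := by ring
        rw [this]; exact P.mul_mem_left _ hX0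
    calc J.radical ≤ P.radical := Ideal.radical_mono hJP
      _ = P := hprime.radical
  · -- P ≤ radical J
    rw [hP, Ideal.span_le]
    have g1 : ((X 0 : MvPolynomial (Fin 4) ℚ) ^ 4 * X 3 + 3 * X 2 ^ 2) ∈ J :=
      Ideal.subset_span (by simp)
    have g2 : ((X 0 : MvPolynomial (Fin 4) ℚ) ^ 4 * X 2) ∈ J :=
      Ideal.subset_span (by simp)
    have g3 : ((X 1 : MvPolynomial (Fin 4) ℚ) ^ 5) ∈ J :=
      Ideal.subset_span (by simp)
    have g4 : ((3 : MvPolynomial (Fin 4) ℚ) * X 0 ^ 5 + 2 * X 0 ^ 3 * X 2 * X 3) ∈ J :=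
      Ideal.subset_span (by simp)
    have hC3 : ((3 : MvPolynomial (Fin 4) ℚ)) = C (3 : ℚ) := (map_ofNat (C : ℚ →+* MvPolynomial (Fin 4) ℚ) 3).symm
    intro f hf
    simp only [Set.mem_insert_iff, Set.mem_singleton_iff] at hf
    rcases hf with rfl | rfl | rfl
    · -- X 0 : x^6 = (1/3)(x*g4 - 2*t*g2)
      have h3 : (3 : MvPolynomial (Fin 4) ℚ) * X 0 ^ 6 ∈ J := by
        have : (3 : MvPolynomial (Fin 4) ℚ) * X 0 ^ 6
            = X 0 * (3 * X 0 ^ 5 + 2 * X 0 ^ 3 * X 2 * X 3)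
              - (2 * X 3) * (X 0 ^ 4 * X 2) := by ring
        rw [this]; exact J.sub_mem (J.mul_mem_left _ g4) (J.mul_mem_left _ g2)
      refine ⟨6, ?_⟩
      have : (X 0 : MvPolynomial (Fin 4) ℚ) ^ 6
          = C (3⁻¹ : ℚ) * (3 * X 0 ^ 6) := by
        rw [hC3, ← mul_assoc, ← C_mul]; norm_num
      rw [this]; exact J.mul_mem_left _ h3
    · exact ⟨5, g3⟩
    · -- X 2 : 3z^3 = z*g1 - t*g2
      have h3 : (3 : MvPolynomial (Fin 4) ℚ) * X 2 ^ 3 ∈ J := by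
        have : (3 : MvPolynomial (Fin 4) ℚ) * X 2 ^ 3
            = X 2 * (X 0 ^ 4 * X 3 + 3 * X 2 ^ 2) - X 3 * (X 0 ^ 4 * X 2) := by ring
        rw [this]; exact J.sub_mem (J.mul_mem_left _ g1) (J.mul_mem_left _ g2)
      refine ⟨3, ?_⟩
      have : (X 2 : MvPolynomial (Fin 4) ℚ) ^ 3
          = C (3⁻¹ : ℚ) * (3 * X 2 ^ 3) := by
        rw [hC3, ← mul_assoc, ← C_mul]; norm_num
      rw [this]; exact J.mul_mem_left _ h3
end

section
/- The pair (V₁ \ V₂, V₂), where V₁ ⊂ ℂ⁴ is the hypersurface x⁶ + y⁶ + x⁴zt + z³ = 0 and V₂ = {(0,0,0,t)} is its singular locus, fails Whitney's condition (a) at every point (0,0,0,ξ) with 4ξ³ + 27 = 0: there is a sequence p_ε ∈ V₁ \ V₂ converging to (0,0,0,ξ) whose tangent hyperplanes are constantly T = {t = 0}, while the tangent line of V₂ (the t-axis) is not contained in T. -/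
open Filter

/-- `f(x,y,z,t) = x⁶ + y⁶ + x⁴zt + z³`. -/
noncomputable def briSpe (p : ℂ × ℂ × ℂ × ℂ) : ℂ :=
  p.1 ^ 6 + p.2.1 ^ 6 + p.1 ^ 4 * p.2.2.1 * p.2.2.2 + p.2.2.1 ^ 3

/-- The gradient of `briSpe`. -/
noncomputable def briSpeGrad (p : ℂ × ℂ × ℂ × ℂ) : ℂ × ℂ × ℂ × ℂ :=
  (6 * p.1 ^ 5 + 4 * p.1 ^ 3 * p.2.2.1 * p.2.2.2,
   6 * p.2.1 ^ 5,
   3 * p.2.2.1 ^ 2 + p.1 ^ 4 * p.2.2.2,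
   p.1 ^ 4 * p.2.2.1)

/-!
When `4ξ³ + 27 = 0`, put `c = 2ξ²/9`; then `c³ = 1/2` and `ξ = -3c²`. Along the curve
`ε ↦ (ε, 0, cε², ξ)` the polynomial `x⁶ + y⁶ + x⁴zt + z³` vanishes identically, and the
`x`- and `z`-components of its gradient vanish as well, leaving the gradient `(0, 0, 0, cε⁶)`.
So every tangent hyperplane along the curve is `{t = 0}`, which misses the direction of the
`t`-axis even though the curve tends to `(0, 0, 0, ξ)`.
-/

open Topology

def dotKernel (g : ℂ × ℂ × ℂ × ℂ) : Set (ℂ × ℂ × ℂ × ℂ) :=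
  {v | g.1 * v.1 + g.2.1 * v.2.1 + g.2.2.1 * v.2.2.1 + g.2.2.2 * v.2.2.2 = 0}

theorem dotKernel_of_ne_zero {a : ℂ} (ha : a ≠ 0) :
    dotKernel (0, 0, 0, a) = {v | v.2.2.2 = 0} := by
  ext v
  simp [dotKernel, ha]

noncomputable def briSpeCurve (ξ ε : ℂ) : ℂ × ℂ × ℂ × ℂ :=
  (ε, 0, 2 * ξ ^ 2 / 9 * ε ^ 2, ξ)

theorem tendsto_briSpeCurve_zero (ξ : ℂ) :
    Tendsto (briSpeCurve ξ) (𝓝 0) (𝓝 (0, 0, 0, ξ)) := by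
  have hcont : Continuous (briSpeCurve ξ) := by
    unfold briSpeCurve
    fun_prop
  simpa [briSpeCurve] using hcont.tendsto 0

section

variable {ξ : ℂ} (hξ : 4 * ξ ^ 3 + 27 = 0)
include hξ

theorem briSpe_briSpeCurve (ε : ℂ) : briSpe (briSpeCurve ξ ε) = 0 := by
  simp only [briSpe, briSpeCurve]
  linear_combination (2 / 729 * ε ^ 6 * (ξ ^ 3 + 27 / 2)) * hξ

theorem briSpeGrad_briSpeCurve (ε : ℂ) :
    briSpeGrad (briSpeCurve ξ ε) = (0, 0, 0, 2 * ξ ^ 2 / 9 * ε ^ 6) := by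
  simp only [briSpeGrad, briSpeCurve, Prod.mk.injEq]
  refine ⟨?_, by ring, ?_, by ring⟩
  · linear_combination (2 / 9 * ε ^ 5) * hξ
  · linear_combination (ε ^ 4 * ξ / 27) * hξ

theorem dotKernel_briSpeGrad_briSpeCurve {ε : ℂ} (hε : ε ≠ 0) :
    dotKernel (briSpeGrad (briSpeCurve ξ ε)) = {v | v.2.2.2 = 0} := by
  have hξ0 : ξ ≠ 0 := by
    rintro rfl
    norm_num at hξ
  rw [briSpeGrad_briSpeCurve hξ]
  exact dotKernel_of_ne_zero (by simp [hξ0, hε])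

end

theorem stmt19 (ξ : ℂ) (hξ : 4 * ξ ^ 3 + 27 = 0) :
    ∃ p : ℕ → ℂ × ℂ × ℂ × ℂ,
      (∀ n, briSpe (p n) = 0 ∧
        ¬ ((p n).1 = 0 ∧ (p n).2.1 = 0 ∧ (p n).2.2.1 = 0)) ∧
      Tendsto p atTop (nhds (0, 0, 0, ξ)) ∧
      (∀ n, {v : ℂ × ℂ × ℂ × ℂ |
          (briSpeGrad (p n)).1 * v.1 + (briSpeGrad (p n)).2.1 * v.2.1
            + (briSpeGrad (p n)).2.2.1 * v.2.2.1
            + (briSpeGrad (p n)).2.2.2 * v.2.2.2 = 0}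
        = {v : ℂ × ℂ × ℂ × ℂ | v.2.2.2 = 0}) ∧
      ¬ ({v : ℂ × ℂ × ℂ × ℂ | v.1 = 0 ∧ v.2.1 = 0 ∧ v.2.2.1 = 0}
          ⊆ {v : ℂ × ℂ × ℂ × ℂ | v.2.2.2 = 0}) := by
  set ε : ℕ → ℂ := fun n ↦ 1 / ((n : ℂ) + 1)
  have hε : ∀ n, ε n ≠ 0 := fun n ↦ one_div_ne_zero (Nat.cast_add_one_ne_zero n)
  refine ⟨briSpeCurve ξ ∘ ε, fun n ↦ ⟨briSpe_briSpeCurve hξ _, fun h ↦ hε n h.1⟩,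
    (tendsto_briSpeCurve_zero ξ).comp tendsto_one_div_add_atTop_nhds_zero_nat,
    fun n ↦ dotKernel_briSpeGrad_briSpeCurve hξ (hε n), fun h ↦ ?_⟩
  simpa using @h (0, 0, 0, 1) ⟨rfl, rfl, rfl⟩
end
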